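/- arXiv:1910.11522 — 2 statements merged into one kernel-verified Lean document; each statement's English description precedes it below -/
import Mathlib

section
/- Let ((S_1)_{s_1},...,(S_ℓ)_{s_ℓ}) be a decorated ordered set partition of type Δ_{k,n}, i.e., (S_1,...,S_ℓ) is an ordered set partition of {1,...,n}, the s_j are integers with Σ s_j = k and 1 ≤ s_j ≤ |S_j| - 1 for each j. Then the polytope [ (S_1)_{s_1},...,(S_ℓ)_{s_ℓ} ] ∩ Δ_{k,n}, cut out by x_{S_1∪⋯∪S_p} ≥ s_1 + ⋯ + s_p for p = 1,...,ℓ-1, is nonempty and has dimension n-1 (i.e., full-dimensional in the hyperplane Σ x_i = k). -/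
open Finset Filter Function Topology

/-!
Pick block sums `s j + e j`, where the perturbation `e` has `|e j| < 1`, total sum `0`, and
strictly positive partial sums before the last block. Spreading each block sum evenly over its
block gives a point with `0 < x i < 1` satisfying every partial-sum inequality except the last one
strictly; the last one is the equation `∑ x = k`. So a neighbourhood of this point inside the
hyperplane `∑ x = k` lies in the polytope, and a relatively open nonempty piece of an affine
subspace spans it.
-/

theorem affineSpan_eq_of_isOpen_inter_subset {𝕜 V : Type*} [NontriviallyNormedField 𝕜]
    [AddCommGroup V] [Module 𝕜 V] [TopologicalSpace V] [ContinuousAdd V] [ContinuousSMul 𝕜 V]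
    {A : AffineSubspace 𝕜 V} {P U : Set V} (hPA : P ⊆ A) (hU : IsOpen U)
    (hUA : (U ∩ A).Nonempty) (hUP : U ∩ A ⊆ P) : affineSpan 𝕜 P = A := by
  refine le_antisymm ((affineSpan_le).2 hPA) fun y hy => ?_
  obtain ⟨x₀, hx₀U, hx₀A⟩ := hUA
  have hd : y -ᵥ x₀ ∈ A.direction := A.vsub_mem_direction hy hx₀A
  have hline : Continuous fun t : 𝕜 => t • (y -ᵥ x₀) +ᵥ x₀ := by fun_prop
  have hev : ∀ᶠ t in 𝓝[≠] (0 : 𝕜), t • (y -ᵥ x₀) +ᵥ x₀ ∈ U :=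
    nhdsWithin_le_nhds <| hline.continuousAt.preimage_mem_nhds <| by simpa using hU.mem_nhds hx₀U
  obtain ⟨t, htU, ht⟩ := (hev.and self_mem_nhdsWithin).exists
  have hz : t • (y -ᵥ x₀) +ᵥ x₀ ∈ affineSpan 𝕜 P :=
    subset_affineSpan _ _ <|
      hUP ⟨htU, A.vadd_mem_of_mem_direction (A.direction.smul_mem t hd) hx₀A⟩
  have hx₀ : x₀ ∈ affineSpan 𝕜 P := subset_affineSpan _ _ (hUP ⟨hx₀U, hx₀A⟩)
  simpa [smul_smul, inv_mul_cancel₀ (show t ≠ 0 from ht)] using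
    AffineSubspace.smul_vsub_vadd_mem _ t⁻¹ hz hx₀ hx₀

section Partition

variable {ι α : Type*} {S : ι → Finset α}

theorem sum_sum_eq_sum_of_partition [Fintype ι] [Fintype α] [DecidableEq α] {M : Type*}
    [AddCommMonoid M] (hdisj : Pairwise (Disjoint on S)) (hcover : ∀ a, ∃ i, a ∈ S i)
    (x : α → M) : ∑ i, ∑ a ∈ S i, x a = ∑ a, x a := by
  have hunion : univ.biUnion S = univ :=
    eq_univ_of_forall fun a => mem_biUnion.2 <| (hcover a).imp fun i hi => ⟨mem_univ i, hi⟩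
  rw [← sum_biUnion (hdisj.set_pairwise _), hunion]

theorem exists_mem_Ioo_forall_sum_eq (hdisj : Pairwise (Disjoint on S))
    (hcover : ∀ a, ∃ i, a ∈ S i) (b : ι → ℝ) (hb : ∀ i, 0 < b i ∧ b i < #(S i)) :
    ∃ x : α → ℝ, (∀ a, 0 < x a ∧ x a < 1) ∧ ∀ i, ∑ a ∈ S i, x a = b i := by
  choose f hf using hcover
  have hfS : ∀ i, ∀ a ∈ S i, f a = i := fun i a ha =>
    by_contra fun h => disjoint_left.1 (hdisj h) (hf a) ha
  refine ⟨fun a => b (f a) / #(S (f a)), fun a => ?_, fun i => ?_⟩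
  · have hcard : (0 : ℝ) < #(S (f a)) := (hb _).1.trans (hb _).2
    exact ⟨div_pos (hb _).1 hcard, (div_lt_one hcard).2 (hb _).2⟩
  · have hcard : (#(S i) : ℝ) ≠ 0 := ((hb i).1.trans (hb i).2).ne'
    rw [sum_congr rfl fun a ha => show b (f a) / #(S (f a)) = b i / #(S i) by rw [hfS i a ha],
      sum_const, nsmul_eq_mul, mul_div_cancel₀ _ hcard]

end Partition

theorem exists_abs_lt_one_sum_eq_zero_prefix_sum_pos (m : ℕ) :
    ∃ e : Fin (m + 1) → ℝ, (∀ j, |e j| < 1) ∧ ∑ j, e j = 0 ∧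
      ∀ p ≠ Fin.last m, 0 < ∑ q ∈ Iic p, e q := by
  refine ⟨Pi.single 0 (1 / 2) - Pi.single (Fin.last m) (1 / 2), fun j => ?_, ?_, fun p hp => ?_⟩
  · simp only [Pi.sub_apply, Pi.single_apply]
    split_ifs <;> norm_num
  · simp [sum_sub_distrib, sum_pi_single']
  · have hlast : Fin.last m ∉ Iic p := by simpa [Fin.last_le_iff] using hp
    simp [sum_sub_distrib, sum_pi_single', hlast]

/-- The polytope `[(S₁)_{s₁}, …, (S_ℓ)_{s_ℓ}] ∩ Δ_{k,n}`. -/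
def decoratedPolytope (n k : ℕ) {ℓ : ℕ} (S : Fin ℓ → Finset (Fin n)) (s : Fin ℓ → ℕ) :
    Set (Fin n → ℝ) :=
  {x | (∀ i, 0 ≤ x i ∧ x i ≤ 1) ∧ ∑ i, x i = (k : ℝ) ∧
    ∀ p : Fin ℓ, (∑ q ∈ Iic p, (s q : ℝ)) ≤ ∑ q ∈ Iic p, ∑ t ∈ S q, x t}

def coordSumHyperplane (n : ℕ) (c : ℝ) : AffineSubspace ℝ (Fin n → ℝ) where
  carrier := {x | ∑ i, x i = c}
  smul_vsub_vadd_mem' t x y z hx hy hz := by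
    simp_all [sum_add_distrib, sum_sub_distrib, ← mul_sum]

section Decorated

variable {n m : ℕ} (S : Fin (m + 1) → Finset (Fin n)) (s : Fin (m + 1) → ℕ)

/-- The last partial-sum inequality is left out: on `Δ_{k,n}` it is the equation `∑ x = k`. -/
def decoratedStrictRegion : Set (Fin n → ℝ) :=
  {x | (∀ i, 0 < x i ∧ x i < 1) ∧
    ∀ p ≠ Fin.last m, (∑ q ∈ Iic p, (s q : ℝ)) < ∑ q ∈ Iic p, ∑ t ∈ S q, x t}

theorem isOpen_decoratedStrictRegion : IsOpen (decoratedStrictRegion S s) := by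
  simp only [decoratedStrictRegion, Set.ofPred_and, Set.ofPred_forall]
  refine (isOpen_iInter_of_finite fun i => ?_).inter
    (isOpen_iInter_of_finite fun p => isOpen_iInter_of_finite fun _ => ?_)
  · exact (isOpen_lt continuous_const (continuous_apply i)).inter
      (isOpen_lt (continuous_apply i) continuous_const)
  · exact isOpen_lt continuous_const (by fun_prop)

variable {S s}

theorem decoratedStrictRegion_inter_subset {k : ℕ} (hdisj : Pairwise (Disjoint on S))
    (hcover : ∀ i, ∃ j, i ∈ S j) (hsum : ∑ j, s j = k) :
    decoratedStrictRegion S s ∩ coordSumHyperplane n k ⊆ decoratedPolytope n k S s := by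
  rintro x ⟨⟨hx01, hpartial⟩, hxsum⟩
  refine ⟨fun i => ⟨(hx01 i).1.le, (hx01 i).2.le⟩, hxsum, fun p => ?_⟩
  rcases eq_or_ne p (Fin.last m) with rfl | hp
  · rw [← Fin.top_eq_last, Iic_top, sum_sum_eq_sum_of_partition hdisj hcover, hxsum]
    exact_mod_cast hsum.le
  · exact (hpartial p hp).le

theorem decoratedStrictRegion_inter_nonempty {k : ℕ} (hdisj : Pairwise (Disjoint on S))
    (hcover : ∀ i, ∃ j, i ∈ S j) (hsum : ∑ j, s j = k) (hs : ∀ j, 1 ≤ s j ∧ s j ≤ #(S j) - 1) :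
    (decoratedStrictRegion S s ∩ coordSumHyperplane n k).Nonempty := by
  obtain ⟨e, he, hesum, hepos⟩ := exists_abs_lt_one_sum_eq_zero_prefix_sum_pos m
  have hb : ∀ j, 0 < s j + e j ∧ s j + e j < #(S j) := fun j => by
    have h1 : (1 : ℝ) ≤ s j := by exact_mod_cast (hs j).1
    have hcard : s j + 1 ≤ #(S j) := by have := hs j; omega
    have h2 : (s j : ℝ) + 1 ≤ #(S j) := by exact_mod_cast hcard
    have := abs_lt.1 (he j)
    constructor <;> linarith
  obtain ⟨x, hx01, hxS⟩ := exists_mem_Ioo_forall_sum_eq hdisj hcover _ hb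
  refine ⟨x, ⟨hx01, fun p hp => ?_⟩, ?_⟩
  · simp only [hxS, sum_add_distrib]
    linarith [hepos p hp]
  · show ∑ i, x i = (k : ℝ)
    rw [← sum_sum_eq_sum_of_partition hdisj hcover]
    simp only [hxS, sum_add_distrib, hesum, add_zero]
    exact_mod_cast hsum

end Decorated

theorem stmt9_general (n ℓ k : ℕ) (hk : 1 ≤ k)
    (S : Fin ℓ → Finset (Fin n)) (s : Fin ℓ → ℕ)
    (hdisj : ∀ p q : Fin ℓ, p ≠ q → Disjoint (S p) (S q))
    (hcover : ∀ m : Fin n, ∃ p : Fin ℓ, m ∈ S p)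
    (hsum : ∑ j, s j = k)
    (hs : ∀ j, 1 ≤ s j ∧ s j ≤ (S j).card - 1) :
    let P : Set (Fin n → ℝ) :=
      {x | (∀ m, 0 ≤ x m ∧ x m ≤ 1) ∧ ∑ m, x m = (k : ℝ) ∧
        ∀ p : Fin ℓ,
          (∑ q ∈ Finset.Iic p, (s q : ℝ)) ≤ ∑ q ∈ Finset.Iic p, ∑ t ∈ S q, x t}
    P.Nonempty ∧ (affineSpan ℝ P : Set (Fin n → ℝ)) = {x | ∑ m, x m = (k : ℝ)} := by
  show (decoratedPolytope n k S s).Nonempty ∧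
    (affineSpan ℝ (decoratedPolytope n k S s) : Set (Fin n → ℝ)) = coordSumHyperplane n k
  obtain ⟨m, rfl⟩ : ∃ m, ℓ = m + 1 :=
    Nat.exists_eq_succ_of_ne_zero <| by rintro rfl; simp at hsum; omega
  have hne := decoratedStrictRegion_inter_nonempty hdisj hcover hsum hs
  have hsub := decoratedStrictRegion_inter_subset hdisj hcover hsum
  exact ⟨hne.mono hsub, congrArg _ <| affineSpan_eq_of_isOpen_inter_subset (fun x hx => hx.2.1)
    (isOpen_decoratedStrictRegion S s) hne hsub⟩

theorem stmt9 (n ℓ k : ℕ) (hk : 1 ≤ k) (hkn : k ≤ n - 1)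
    (S : Fin ℓ → Finset (Fin n)) (s : Fin ℓ → ℕ)
    (hdisj : ∀ p q : Fin ℓ, p ≠ q → Disjoint (S p) (S q))
    (hcover : ∀ m : Fin n, ∃ p : Fin ℓ, m ∈ S p)
    (hne : ∀ p, (S p).Nonempty)
    (hsum : ∑ j, s j = k)
    (hs : ∀ j, 1 ≤ s j ∧ s j ≤ (S j).card - 1) :
    let P : Set (Fin n → ℝ) :=
      {x | (∀ m, 0 ≤ x m ∧ x m ≤ 1) ∧ ∑ m, x m = (k : ℝ) ∧
        ∀ p : Fin ℓ,
          (∑ q ∈ Finset.Iic p, (s q : ℝ)) ≤ ∑ q ∈ Finset.Iic p, ∑ t ∈ S q, x t}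
    P.Nonempty ∧ (affineSpan ℝ P : Set (Fin n → ℝ)) = {x | ∑ m, x m = (k : ℝ)} :=
  stmt9_general n ℓ k hk S s hdisj hcover hsum hs
end

section
/- Let S, T ⊆ {1,...,n} with 2 ≤ |S|, |T| ≤ n-2. The two 2-splits of Δ_{2,n} given by the hyperplanes x_S = 1 and x_T = 1 are compatible (i.e., the vertex sets of all four polytopes {x ∈ Δ_{2,n} : x_S ≥ 1 or ≤ 1} ∩ {x ∈ Δ_{2,n} : x_T ≥ 1 or ≤ 1} span matroid polytopes; equivalently, no cell of the common refinement has an edge in a non-root direction) if at least one of the four intersections S∩T, S∩T^c, S^c∩T, S^c∩T^c is empty. -/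
/-- The 0/1 indicator vector of a subset `B ⊆ {1,...,n}`. -/
def ind (n : ℕ) (B : Finset (Fin n)) : Fin n → ℝ :=
  fun i => if i ∈ B then 1 else 0

/-!
Complementing `S` exchanges the two sides of its hyperplane inside `Δ_{2,n}`, because
`x_{Sᶜ} = 2 - x_S` there; so we may assume `S ∩ T = ∅`. Each cell is then compact and convex,
hence by Krein–Milman the convex hull of its extreme points. If a point of the cell has a
fractional coordinate `x_m`, then the part among `S`, `T`, `(S ∪ T)ᶜ`, `Sᶜ`, `Tᶜ`, `univ` that
contains `m`, has integral sum and lies on one side of every tight hyperplane contains a second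
fractional coordinate `x_j`; moving along `e_m - e_j` keeps the cell, so the point is not extreme.
Hence the extreme points are 0/1 vectors. Whether a pair `{a, b}` is a vertex of the cell only
depends on which of `S`, `T` contain `a` and `b`, and basis exchange is checked on these data.
-/

open Finset hiding Icc Ioo
open Set Filter Topology

section Lemmas

variable {ι : Type*}

lemma convex_setOf_sum_mem (U : Finset ι) {P : Set ℝ} (hP : Convex ℝ P) :
    Convex ℝ {x : ι → ℝ | ∑ k ∈ U, x k ∈ P} := by
  intro x hx y hy a b ha hb hab
  simpa only [mem_ofPred_eq, Pi.add_apply, Pi.smul_apply, smul_eq_mul, sum_add_distrib,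
    ← mul_sum] using hP hx hy ha hb hab

lemma isClosed_setOf_sum_mem (U : Finset ι) {P : Set ℝ} (hP : IsClosed P) :
    IsClosed {x : ι → ℝ | ∑ k ∈ U, x k ∈ P} :=
  hP.preimage (continuous_finsetSum U fun k _ => continuous_apply k)

lemma eventually_add_mul_mem {P : Set ℝ} {a b : ℝ} (ha : a ∈ P)
    (h : b = 0 ∨ a ∈ interior P) : ∀ᶠ t in 𝓝 (0 : ℝ), a + t * b ∈ P := by
  rcases h with rfl | h
  · simpa using ha
  · have hlim : Tendsto (fun t : ℝ => a + t * b) (𝓝 0) (𝓝 a) := by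
      exact Continuous.tendsto' (by fun_prop) 0 a (by simp)
    exact hlim.eventually (mem_interior_iff_mem_nhds.1 h)

lemma eventually_sum_add_smul_mem {x d : ι → ℝ} (U : Finset ι) {P : Set ℝ}
    (hx : ∑ k ∈ U, x k ∈ P) (h : ∑ k ∈ U, d k = 0 ∨ ∑ k ∈ U, x k ∈ interior P) :
    ∀ᶠ t in 𝓝 (0 : ℝ), ∑ k ∈ U, (x + t • d) k ∈ P := by
  simpa only [Pi.add_apply, Pi.smul_apply, smul_eq_mul, sum_add_distrib, ← mul_sum]
    using eventually_add_mul_mem hx h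

lemma exists_ne_mem_Ioo_of_sum_eq_intCast {x : ι → ℝ} {U : Finset ι} {c : ℤ}
    (hx : ∀ k ∈ U, x k ∈ Icc 0 1) (hsum : ∑ k ∈ U, x k = c) {i : ι} (hi : i ∈ U)
    (hxi : x i ∈ Ioo 0 1) : ∃ j ∈ U, j ≠ i ∧ x j ∈ Ioo 0 1 := by
  classical
  by_contra! h
  have hbool : ∀ k ∈ U.erase i, x k = if x k = 1 then 1 else 0 := by
    intro k hk
    obtain ⟨hki, hkU⟩ := mem_erase.1 hk
    rcases (hx k hkU).1.eq_or_lt with h0 | h0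
    · simp [← h0]
    · have h1 : x k = 1 := (hx k hkU).2.antisymm (not_lt.1 fun h1 => h k hkU hki ⟨h0, h1⟩)
      simp [h1]
  have hxi_int : x i = ((c - #{k ∈ U.erase i | x k = 1} : ℤ) : ℝ) := by
    rw [← add_sum_erase U x hi, sum_congr rfl hbool, sum_boole] at hsum
    push_cast
    linarith
  obtain ⟨h0, h1⟩ := hxi
  rw [hxi_int] at h0 h1
  norm_cast at h0 h1
  omega

end Lemmas

section Convex

variable {E : Type*} [AddCommGroup E] [Module ℝ E]

lemma notMem_extremePoints_of_eventually_add_smul_mem {A : Set E} {x d : E} (hd : d ≠ 0)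
    (h : ∀ᶠ t in 𝓝 (0 : ℝ), x + t • d ∈ A) : x ∉ A.extremePoints ℝ := by
  intro hx
  obtain ⟨ε, hε, hball⟩ := Metric.eventually_nhds_iff.1 h
  have hε2 : |ε / 2| < ε := by rw [abs_of_pos (half_pos hε)]; exact half_lt_self hε
  have hadd : x + (ε / 2) • d ∈ A := hball (by rwa [Real.dist_0_eq_abs])
  have hsub : x - (ε / 2) • d ∈ A := by
    simpa [neg_smul, ← sub_eq_add_neg] using
      hball (y := -(ε / 2)) (by rwa [Real.dist_0_eq_abs, abs_neg])
  have := (mem_extremePoints_iff_left.1 hx).2 _ hadd _ hsub (mem_openSegment_add_sub x _)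
  simp [hd, hε.ne'] at this

variable [TopologicalSpace E] [IsTopologicalAddGroup E] [ContinuousSMul ℝ E]
  [LocallyConvexSpace ℝ E] [T2Space E]

lemma eq_convexHull_of_extremePoints_subset {C F : Set E} (hC : IsCompact C)
    (hC_conv : Convex ℝ C) (hF : F.Finite) (hFC : F ⊆ C) (hext : C.extremePoints ℝ ⊆ F) :
    C = convexHull ℝ F := by
  refine (convexHull_min hFC hC_conv).antisymm' ?_
  calc C = closure (convexHull ℝ (C.extremePoints ℝ)) :=
        (closure_convexHull_extremePoints hC hC_conv).symm
    _ ⊆ closure (convexHull ℝ F) := closure_mono (convexHull_mono hext)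
    _ = convexHull ℝ F := (hF.isClosed_convexHull (𝕜 := ℝ)).closure_eq

end Convex

/-- The hypersimplex `Δ_{2,n}`. -/
def hypersimplex (n : ℕ) : Set (Fin n → ℝ) := {x | (∀ m, x m ∈ Icc 0 1) ∧ ∑ m, x m = 2}

def halfLine (ε : Bool) : Set ℝ := {a | if ε then 1 ≤ a else a ≤ 1}

def cell {n : ℕ} (S T : Finset (Fin n)) (ε1 ε2 : Bool) : Set (Fin n → ℝ) :=
  hypersimplex n ∩ ({x | ∑ t ∈ S, x t ∈ halfLine ε1} ∩ {x | ∑ t ∈ T, x t ∈ halfLine ε2})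

def bases {n : ℕ} (C : Set (Fin n → ℝ)) : Set (Finset (Fin n)) := {B | #B = 2 ∧ ind n B ∈ C}

def IsRankTwoMatroidPolytope {n : ℕ} (C : Set (Fin n → ℝ)) : Prop :=
  C = convexHull ℝ (ind n '' bases C) ∧
    ∀ B1 ∈ bases C, ∀ B2 ∈ bases C, ∀ i ∈ B1 \ B2, ∃ j ∈ B2 \ B1, insert j (B1.erase i) ∈ bases C

section HalfLine

variable {ε : Bool} {a : ℝ}

lemma isClosed_halfLine (ε : Bool) : IsClosed (halfLine ε) := by
  cases ε
  exacts [isClosed_Iic, isClosed_Ici]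

lemma convex_halfLine (ε : Bool) : Convex ℝ (halfLine ε) := by
  cases ε
  exacts [convex_Iic 1, convex_Ici 1]

lemma mem_interior_halfLine (ha : a ∈ halfLine ε) (ha1 : a ≠ 1) : a ∈ interior (halfLine ε) := by
  cases ε
  · change a ∈ interior (Iic 1)
    rw [interior_Iic]
    exact lt_of_le_of_ne ha ha1
  · change a ∈ interior (Ici 1)
    rw [interior_Ici]
    exact lt_of_le_of_ne ha (Ne.symm ha1)

lemma two_sub_mem_halfLine : 2 - a ∈ halfLine ε ↔ a ∈ halfLine (!ε) := by
  cases ε <;> simp only [halfLine, mem_ofPred_eq, Bool.not_false, Bool.not_true, if_true,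
    if_false, Bool.false_eq_true] <;> constructor <;> intro h <;> linarith

end HalfLine

variable {n : ℕ} {S T : Finset (Fin n)} {ε1 ε2 : Bool} {x : Fin n → ℝ}

lemma hypersimplex_eq_pi_inter :
    hypersimplex n = univ.pi (fun _ => Icc 0 1) ∩ {x | ∑ m, x m ∈ ({2} : Set ℝ)} := by
  ext x
  simp only [hypersimplex, mem_inter_iff, mem_univ_pi, mem_ofPred_eq, mem_singleton_iff]

lemma convex_cell : Convex ℝ (cell S T ε1 ε2) := by
  rw [cell, hypersimplex_eq_pi_inter]
  exact ((convex_pi fun _ _ => convex_Icc 0 1).inter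
    (convex_setOf_sum_mem _ (convex_singleton 2))).inter
      ((convex_setOf_sum_mem S (convex_halfLine ε1)).inter
        (convex_setOf_sum_mem T (convex_halfLine ε2)))

lemma isCompact_cell : IsCompact (cell S T ε1 ε2) := by
  rw [cell, hypersimplex_eq_pi_inter, inter_assoc]
  exact (isCompact_univ_pi fun _ => isCompact_Icc).inter_right <|
    (isClosed_setOf_sum_mem _ isClosed_singleton).inter <|
      (isClosed_setOf_sum_mem S (isClosed_halfLine ε1)).inter
        (isClosed_setOf_sum_mem T (isClosed_halfLine ε2))

lemma sum_compl_eq_two_sub (hx : x ∈ hypersimplex n) (U : Finset (Fin n)) :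
    ∑ k ∈ Uᶜ, x k = 2 - ∑ k ∈ U, x k := by
  rw [← hx.2, ← sum_add_sum_compl U x]
  ring

lemma cell_compl_left : cell Sᶜ T ε1 ε2 = cell S T (!ε1) ε2 := by
  ext x
  simp only [cell, mem_inter_iff, mem_ofPred_eq]
  exact and_congr_right fun hx => by rw [sum_compl_eq_two_sub hx, two_sub_mem_halfLine]

lemma cell_compl_right : cell S Tᶜ ε1 ε2 = cell S T ε1 (!ε2) := by
  ext x
  simp only [cell, mem_inter_iff, mem_ofPred_eq]
  exact and_congr_right fun hx => by rw [sum_compl_eq_two_sub hx, two_sub_mem_halfLine]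

lemma exists_partner_of_disjoint (hST : Disjoint S T) (hx : x ∈ hypersimplex n) {m : Fin n}
    (hm : x m ∈ Ioo 0 1) :
    ∃ j ≠ m, x j ∈ Ioo 0 1 ∧ (∑ k ∈ S, x k = 1 → (j ∈ S ↔ m ∈ S)) ∧
      (∑ k ∈ T, x k = 1 → (j ∈ T ↔ m ∈ T)) := by
  have block (U : Finset (Fin n)) (c : ℤ) (hU : ∑ k ∈ U, x k = c) (hmU : m ∈ U) :
      ∃ j ∈ U, j ≠ m ∧ x j ∈ Ioo 0 1 :=
    exists_ne_mem_Ioo_of_sum_eq_intCast (fun k _ => hx.1 k) hU hmU hm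
  have tight (U : Finset (Fin n)) (hU : ∑ k ∈ U, x k = 1) :
      ∃ j ≠ m, x j ∈ Ioo 0 1 ∧ (j ∈ U ↔ m ∈ U) := by
    by_cases hmU : m ∈ U
    · obtain ⟨j, hjU, hjm, hj⟩ := block U 1 (by simpa using hU) hmU
      exact ⟨j, hjm, hj, iff_of_true hjU hmU⟩
    · obtain ⟨j, hjU, hjm, hj⟩ :=
        block Uᶜ 1 (by rw [sum_compl_eq_two_sub hx, hU]; norm_num) (mem_compl.2 hmU)
      exact ⟨j, hjm, hj, iff_of_false (mem_compl.1 hjU) hmU⟩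
  by_cases hS : ∑ k ∈ S, x k = 1 <;> by_cases hT : ∑ k ∈ T, x k = 1
  · by_cases hmS : m ∈ S
    · obtain ⟨j, hjS, hjm, hj⟩ := block S 1 (by simpa using hS) hmS
      exact ⟨j, hjm, hj, fun _ => iff_of_true hjS hmS,
        fun _ => iff_of_false (disjoint_left.1 hST hjS) (disjoint_left.1 hST hmS)⟩
    by_cases hmT : m ∈ T
    · obtain ⟨j, hjT, hjm, hj⟩ := block T 1 (by simpa using hT) hmT
      exact ⟨j, hjm, hj, fun _ => iff_of_false (disjoint_right.1 hST hjT) hmS,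
        fun _ => iff_of_true hjT hmT⟩
    · obtain ⟨j, hj_rest, hjm, hj⟩ := block (S ∪ T)ᶜ 0
        (by rw [sum_compl_eq_two_sub hx, sum_union hST, hS, hT]; norm_num) (by simp [hmS, hmT])
      simp only [Finset.mem_compl, Finset.mem_union, not_or] at hj_rest
      exact ⟨j, hjm, hj, fun _ => iff_of_false hj_rest.1 hmS,
        fun _ => iff_of_false hj_rest.2 hmT⟩
  · obtain ⟨j, hjm, hj, hjS⟩ := tight S hS
    exact ⟨j, hjm, hj, fun _ => hjS, fun h => absurd h hT⟩
  · obtain ⟨j, hjm, hj, hjT⟩ := tight T hT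
    exact ⟨j, hjm, hj, fun h => absurd h hS, fun _ => hjT⟩
  · obtain ⟨j, -, hjm, hj⟩ := block univ 2 (by simpa using hx.2) (mem_univ m)
    exact ⟨j, hjm, hj, fun h => absurd h hS, fun h => absurd h hT⟩

lemma eventually_add_smul_mem_cell {d : Fin n → ℝ} (hx : x ∈ cell S T ε1 ε2)
    (hd : ∀ k, d k = 0 ∨ x k ∈ Ioo 0 1) (hd_univ : ∑ k, d k = 0)
    (hdS : ∑ k ∈ S, d k = 0 ∨ ∑ k ∈ S, x k ≠ 1) (hdT : ∑ k ∈ T, d k = 0 ∨ ∑ k ∈ T, x k ≠ 1) :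
    ∀ᶠ t in 𝓝 (0 : ℝ), x + t • d ∈ cell S T ε1 ε2 := by
  obtain ⟨⟨hbox, hsum⟩, hS, hT⟩ := hx
  refine ((eventually_all.2 fun k => ?_).and ?_).and (Eventually.and ?_ ?_)
  · exact eventually_add_mul_mem (hbox k) ((hd k).imp_right fun h => by rwa [interior_Icc])
  · exact eventually_sum_add_smul_mem univ (P := {2}) hsum (Or.inl hd_univ)
  · exact eventually_sum_add_smul_mem S hS (hdS.imp_right (mem_interior_halfLine hS))
  · exact eventually_sum_add_smul_mem T hT (hdT.imp_right (mem_interior_halfLine hT))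

lemma eq_zero_or_eq_one_of_mem_extremePoints_cell (hST : Disjoint S T)
    (hx : x ∈ (cell S T ε1 ε2).extremePoints ℝ) (m : Fin n) : x m = 0 ∨ x m = 1 := by
  have hΔ := hx.1.1
  by_contra! h
  have hm : x m ∈ Ioo 0 1 :=
    ⟨(hΔ.1 m).1.lt_of_ne (Ne.symm h.1), (hΔ.1 m).2.lt_of_ne h.2⟩
  obtain ⟨j, hjm, hj, hjS, hjT⟩ := exists_partner_of_disjoint hST hΔ hm
  have hsum_d (U : Finset (Fin n)) (hU : ∑ k ∈ U, x k = 1 → (j ∈ U ↔ m ∈ U)) :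
      ∑ k ∈ U, (Pi.single m 1 - Pi.single j 1 : Fin n → ℝ) k = 0 ∨ ∑ k ∈ U, x k ≠ 1 := by
    refine or_iff_not_imp_right.2 fun hU1 => ?_
    simp [sum_sub_distrib, sum_pi_single', hU (not_not.1 hU1)]
  refine notMem_extremePoints_of_eventually_add_smul_mem (d := Pi.single m 1 - Pi.single j 1)
    ?_ (eventually_add_smul_mem_cell hx.1 (fun k => ?_) ?_ (hsum_d S hjS) (hsum_d T hjT)) hx
  · intro h0
    simpa [hjm.symm] using congrFun h0 m
  · by_cases hkm : k = m
    · exact Or.inr (hkm ▸ hm)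
    by_cases hkj : k = j
    · exact Or.inr (hkj ▸ hj)
    · simp [hkm, hkj]
  · simp [sum_sub_distrib]

lemma sum_ind_eq_card_inter (U B : Finset (Fin n)) : ∑ t ∈ U, ind n B t = #(U ∩ B) := by
  simp only [ind]
  rw [sum_boole, filter_mem_eq_inter]

lemma extremePoints_cell_subset (hST : Disjoint S T) :
    (cell S T ε1 ε2).extremePoints ℝ ⊆ ind n '' bases (cell S T ε1 ε2) := by
  intro x hx
  have hx_eq : ind n {k | x k = 1} = x := funext fun k => by
    rcases eq_zero_or_eq_one_of_mem_extremePoints_cell hST hx k with h | h <;> simp [ind, h]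
  have hcard := hx.1.1.2
  rw [← hx_eq, sum_ind_eq_card_inter, Finset.univ_inter] at hcard
  exact ⟨_, ⟨by exact_mod_cast hcard, by rw [hx_eq]; exact hx.1⟩, hx_eq⟩

lemma cell_eq_convexHull (hST : Disjoint S T) :
    cell S T ε1 ε2 = convexHull ℝ (ind n '' bases (cell S T ε1 ε2)) :=
  eq_convexHull_of_extremePoints_subset isCompact_cell convex_cell ((toFinite _).image _)
    (image_subset_iff.2 fun _ hB => hB.2) (extremePoints_cell_subset hST)

def admits (ε u v : Bool) : Bool := if ε then u || v else !(u && v)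

lemma natCast_card_inter_pair_mem_halfLine {a b : Fin n} (hab : a ≠ b) (U : Finset (Fin n))
    (ε : Bool) : (#(U ∩ {a, b}) : ℝ) ∈ halfLine ε ↔ admits ε (a ∈ U) (b ∈ U) := by
  rw [Finset.inter_comm, ← filter_mem_eq_inter]
  by_cases ha : a ∈ U <;> by_cases hb : b ∈ U <;> cases ε <;>
    simp [filter_insert, filter_singleton, ha, hb, hab, halfLine, admits]

lemma pair_mem_bases_cell_iff {a b : Fin n} (hab : a ≠ b) :
    {a, b} ∈ bases (cell S T ε1 ε2) ↔
      (admits ε1 (a ∈ S) (b ∈ S) && admits ε2 (a ∈ T) (b ∈ T)) = true := by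
  have hcard : #{a, b} = 2 := card_pair hab
  have hΔ : ind n {a, b} ∈ hypersimplex n :=
    ⟨fun k => by unfold ind; split_ifs <;> simp,
      by rw [sum_ind_eq_card_inter, Finset.univ_inter, hcard]; norm_num⟩
  simp only [bases, cell, mem_ofPred_eq, mem_inter_iff, hcard, hΔ, true_and,
    sum_ind_eq_card_inter, natCast_card_inter_pair_mem_halfLine hab, Bool.and_eq_true]

lemma admits_exchange : ∀ ε1 ε2 iS iT aS aT b1S b1T b2S b2T : Bool,
    !(iS && iT) → !(aS && aT) → !(b1S && b1T) → !(b2S && b2T) →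
    (admits ε1 iS aS && admits ε2 iT aT) → (admits ε1 b1S b2S && admits ε2 b1T b2T) →
    (admits ε1 aS b1S && admits ε2 aT b1T) || (admits ε1 aS b2S && admits ε2 aT b2T) := by
  decide

lemma exchange_bases_cell (hST : Disjoint S T) {B1 B2 : Finset (Fin n)}
    (hB1 : B1 ∈ bases (cell S T ε1 ε2)) (hB2 : B2 ∈ bases (cell S T ε1 ε2)) {i : Fin n}
    (hi : i ∈ B1 \ B2) : ∃ j ∈ B2 \ B1, insert j (B1.erase i) ∈ bases (cell S T ε1 ε2) := by
  obtain ⟨hiB1, hiB2⟩ := Finset.mem_sdiff.1 hi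
  obtain ⟨a, ha⟩ := card_eq_one.1 (by rw [card_erase_of_mem hiB1, hB1.1] : #(B1.erase i) = 1)
  have hai : a ≠ i := (Finset.mem_erase.1 (ha ▸ Finset.mem_singleton_self a)).1
  have hB1_eq : B1 = {i, a} := by rw [← insert_erase hiB1, ha]
  rw [ha]
  by_cases haB2 : a ∈ B2
  · obtain ⟨c, hc⟩ := card_eq_one.1 (by rw [card_erase_of_mem haB2, hB2.1] : #(B2.erase a) = 1)
    have hca : c ≠ a := (Finset.mem_erase.1 (hc ▸ Finset.mem_singleton_self c)).1
    have hB2_eq : B2 = {a, c} := by rw [← insert_erase haB2, hc]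
    have hci : c ≠ i := by rintro rfl; exact hiB2 (by simp [hB2_eq])
    refine ⟨c, Finset.mem_sdiff.2 ⟨by simp [hB2_eq], by simp [hB1_eq, hci, hca]⟩, ?_⟩
    rwa [Finset.pair_comm, ← hB2_eq]
  · obtain ⟨b1, b2, hb12, hB2_eq⟩ := card_eq_two.1 hB2.1
    subst hB1_eq hB2_eq
    simp only [Finset.mem_insert, Finset.mem_singleton, not_or] at hiB2 haB2
    have hprofile (k : Fin n) : (!(decide (k ∈ S) && decide (k ∈ T))) = true := by
      simpa [← not_and_or] using fun hkS => Finset.disjoint_left.1 hST hkS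
    have hexch := admits_exchange ε1 ε2 _ _ _ _ _ _ _ _ (hprofile i) (hprofile a)
      (hprofile b1) (hprofile b2) ((pair_mem_bases_cell_iff hai.symm).1 hB1)
      ((pair_mem_bases_cell_iff hb12).1 hB2)
    rcases Bool.or_eq_true_iff.1 hexch with h | h
    · refine ⟨b1, by simp [Ne.symm hiB2.1, Ne.symm haB2.1], ?_⟩
      rw [Finset.pair_comm]
      exact (pair_mem_bases_cell_iff haB2.1).2 h
    · refine ⟨b2, by simp [Ne.symm hiB2.2, Ne.symm haB2.2], ?_⟩
      rw [Finset.pair_comm]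
      exact (pair_mem_bases_cell_iff haB2.2).2 h

theorem isRankTwoMatroidPolytope_cell (hST : Disjoint S T) (ε1 ε2 : Bool) :
    IsRankTwoMatroidPolytope (cell S T ε1 ε2) :=
  ⟨cell_eq_convexHull hST, fun _ hB1 _ hB2 _ hi => exchange_bases_cell hST hB1 hB2 hi⟩

theorem stmt15_general (n : ℕ) (S T : Finset (Fin n))
    (hemp : S ∩ T = ∅ ∨ S ∩ Tᶜ = ∅ ∨ Sᶜ ∩ T = ∅ ∨ Sᶜ ∩ Tᶜ = ∅) :
    ∀ ε1 ε2 : Bool,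
      let Δ : Set (Fin n → ℝ) := {x | (∀ m, 0 ≤ x m ∧ x m ≤ 1) ∧ ∑ m, x m = 2}
      let C : Set (Fin n → ℝ) := {x ∈ Δ |
        (if ε1 then (1 : ℝ) ≤ ∑ t ∈ S, x t else ∑ t ∈ S, x t ≤ 1) ∧
        (if ε2 then (1 : ℝ) ≤ ∑ t ∈ T, x t else ∑ t ∈ T, x t ≤ 1)}
      let ℬ : Set (Finset (Fin n)) := {B | B.card = 2 ∧ ind n B ∈ C}
      -- the cell is the matroid polytope of its 0/1 vertices …
      (C = convexHull ℝ (ind n '' ℬ)) ∧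
      -- … and those vertices satisfy the matroid basis exchange property
      (∀ B1 ∈ ℬ, ∀ B2 ∈ ℬ, ∀ i ∈ B1 \ B2, ∃ j ∈ B2 \ B1,
        insert j (B1.erase i) ∈ ℬ) := by
  intro ε1 ε2
  show IsRankTwoMatroidPolytope (cell S T ε1 ε2)
  simp only [← Finset.disjoint_iff_inter_eq_empty] at hemp
  rcases hemp with h | h | h | h
  · exact isRankTwoMatroidPolytope_cell h ε1 ε2
  · simpa [cell_compl_right] using isRankTwoMatroidPolytope_cell h ε1 (!ε2)
  · simpa [cell_compl_left] using isRankTwoMatroidPolytope_cell h (!ε1) ε2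
  · simpa [cell_compl_left, cell_compl_right] using isRankTwoMatroidPolytope_cell h (!ε1) (!ε2)

theorem stmt15 (n : ℕ) (S T : Finset (Fin n))
    (hS1 : 2 ≤ S.card) (hS2 : S.card ≤ n - 2)
    (hT1 : 2 ≤ T.card) (hT2 : T.card ≤ n - 2)
    (hemp : S ∩ T = ∅ ∨ S ∩ Tᶜ = ∅ ∨ Sᶜ ∩ T = ∅ ∨ Sᶜ ∩ Tᶜ = ∅) :
    ∀ ε1 ε2 : Bool,
      let Δ : Set (Fin n → ℝ) := {x | (∀ m, 0 ≤ x m ∧ x m ≤ 1) ∧ ∑ m, x m = 2}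
      let C : Set (Fin n → ℝ) := {x ∈ Δ |
        (if ε1 then (1 : ℝ) ≤ ∑ t ∈ S, x t else ∑ t ∈ S, x t ≤ 1) ∧
        (if ε2 then (1 : ℝ) ≤ ∑ t ∈ T, x t else ∑ t ∈ T, x t ≤ 1)}
      let ℬ : Set (Finset (Fin n)) := {B | B.card = 2 ∧ ind n B ∈ C}
      -- the cell is the matroid polytope of its 0/1 vertices …
      (C = convexHull ℝ (ind n '' ℬ)) ∧
      -- … and those vertices satisfy the matroid basis exchange property
      (∀ B1 ∈ ℬ, ∀ B2 ∈ ℬ, ∀ i ∈ B1 \ B2, ∃ j ∈ B2 \ B1,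
        insert j (B1.erase i) ∈ ℬ) :=
  stmt15_general n S T hemp
end
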